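/- arXiv:0910.3687 — 2 statements merged into one kernel-verified Lean document; each statement's English description precedes it below -/
import Mathlib

section
/- Let E ⊆ ℝ be measurable with upper Banach density D*(E) > 0, where D*(E) = limsup_{(N−M)→∞} m(E ∩ [M,N])/(N−M). Define φ : ℝ → ℝ by φ(s) = min{1, dist(s,E)}, let X be the closure of {φ(·+t) : t ∈ ℝ} in the topology of uniform convergence on compact sets, with flow T_tψ(s) = ψ(s+t), and let Ẽ = {ψ ∈ X : ψ(0) = 0}. If ν is any weak-* limit of the measures μ_n(f) = (1/m(S_n)) ∫_{S_n} f(T_tφ) dt along intervals S_n with m(S_n ∩ E)/m(S_n) → D*(E), then ν(Ẽ) ≥ D*(E). -/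
open MeasureTheory Filter
open scoped ENNReal

/-! The continuous functions `f_k ψ = max 0 (1 - k |ψ 0|)` equal `1` on `Ẽ = {ψ | ψ 0 = 0}` and
decrease pointwise to its indicator. Along the orbit of `φ` they equal `1` on `E`, where `φ`
vanishes, so each `μ_n(f_k)` dominates `m(S_n ∩ E) / m(S_n)`. Passing to the weak-* limit gives
`D*(E) ≤ ν(f_k)` for every `k`, and dominated convergence turns this into `D*(E) ≤ ν(Ẽ)`. -/

/-- Upper Banach density of a set of reals:
`D*(E) = limsup_{(N-M)→∞} m(E ∩ [M,N])/(N-M)`. -/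
noncomputable def upperBanachDensity (E : Set ℝ) : ℝ :=
  Filter.limsup (fun p : ℝ × ℝ => (volume (E ∩ Set.Icc p.1 p.2)).toReal / (p.2 - p.1))
    (Filter.comap (fun p : ℝ × ℝ => p.2 - p.1) Filter.atTop)

/-- The function `φ(s) = min {1, dist(s, E)}`, as a continuous map. -/
noncomputable def phiE (E : Set ℝ) : C(ℝ, ℝ) :=
  ⟨fun s => min 1 (Metric.infDist s E),
    continuous_const.min (Metric.continuous_infDist_pt E)⟩

/-- The translation flow on `C(ℝ, ℝ)`: `(T_t ψ)(s) = ψ(s + t)`. -/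
noncomputable def translateFlow (t : ℝ) (ψ : C(ℝ, ℝ)) : C(ℝ, ℝ) :=
  ψ.comp ⟨fun s => s + t, by continuity⟩

section Cutoff

variable {X : Type*}

noncomputable def cutoffAtZero (k : ℕ) (h : X → ℝ) (x : X) : ℝ :=
  max 0 (1 - k * |h x|)

lemma cutoffAtZero_nonneg (k : ℕ) (h : X → ℝ) (x : X) : 0 ≤ cutoffAtZero k h x :=
  le_max_left _ _

lemma cutoffAtZero_le_one (k : ℕ) (h : X → ℝ) (x : X) : cutoffAtZero k h x ≤ 1 :=
  max_le zero_le_one (by have := mul_nonneg k.cast_nonneg (abs_nonneg (h x)); linarith)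

lemma abs_cutoffAtZero_le_one (k : ℕ) (h : X → ℝ) (x : X) : |cutoffAtZero k h x| ≤ 1 := by
  rw [abs_of_nonneg (cutoffAtZero_nonneg k h x)]
  exact cutoffAtZero_le_one k h x

lemma cutoffAtZero_of_eq_zero (k : ℕ) {h : X → ℝ} {x : X} (hx : h x = 0) :
    cutoffAtZero k h x = 1 := by
  simp [cutoffAtZero, hx]

lemma tendsto_cutoffAtZero (h : X → ℝ) (x : X) :
    Tendsto (fun k => cutoffAtZero k h x) atTop
      (nhds ({y | h y = 0}.indicator 1 x)) := by
  by_cases hx : h x = 0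
  · simp only [cutoffAtZero_of_eq_zero _ hx]
    simp [hx]
  · rw [Set.indicator_of_notMem (show x ∉ {y | h y = 0} from hx)]
    have hgrow : Tendsto (fun k : ℕ => (k : ℝ) * |h x|) atTop atTop :=
      tendsto_natCast_atTop_atTop.atTop_mul_const (abs_pos.mpr hx)
    refine tendsto_const_nhds.congr' ?_
    filter_upwards [hgrow.eventually_ge_atTop 1] with k hk
    exact (max_eq_left (by linarith)).symm

variable [TopologicalSpace X]

lemma Continuous.cutoffAtZero (k : ℕ) {h : X → ℝ} (hh : Continuous h) :
    Continuous (cutoffAtZero k h) :=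
  continuous_const.max (continuous_const.sub (continuous_const.mul hh.abs))

lemma tendsto_integral_cutoffAtZero [MeasurableSpace X] [OpensMeasurableSpace X]
    (ν : Measure X) [IsFiniteMeasure ν] {h : X → ℝ} (hh : Continuous h) :
    Tendsto (fun k => ∫ x, cutoffAtZero k h x ∂ν) atTop (nhds (ν {x | h x = 0}).toReal) := by
  have hmeas : MeasurableSet {x | h x = 0} :=
    (isClosed_eq hh continuous_const).measurableSet
  rw [← measureReal_def, ← integral_indicator_one hmeas]
  refine tendsto_integral_of_dominated_convergence (fun _ => 1)
    (fun k => (hh.cutoffAtZero k).aestronglyMeasurable) (integrable_const 1)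
    (fun k => Eventually.of_forall fun x => abs_cutoffAtZero_le_one k h x)
    (Eventually.of_forall (tendsto_cutoffAtZero h))

end Cutoff

lemma measure_inter_toReal_le_setIntegral {α : Type*} [TopologicalSpace α] [MeasurableSpace α]
    [OpensMeasurableSpace α] {μ : Measure α} {s : Set α} (hs : MeasurableSet s)
    (hμs : μ s ≠ ⊤) (E : Set α) {g : α → ℝ} (hg : Continuous g) (hg_int : IntegrableOn g s μ)
    (hg_nonneg : ∀ t, 0 ≤ g t) (hgE : ∀ t ∈ E, 1 ≤ g t) :
    (μ (E ∩ s)).toReal ≤ ∫ t in s, g t ∂μ := by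
  set Z := {t | 1 ≤ g t}
  have hZ : MeasurableSet Z := (isClosed_le continuous_const hg).measurableSet
  calc (μ (E ∩ s)).toReal
      ≤ (μ (Z ∩ s)).toReal :=
        ENNReal.toReal_mono (measure_ne_top_of_subset Set.inter_subset_right hμs)
          (measure_mono (Set.inter_subset_inter_left _ hgE))
    _ = ∫ t in Z ∩ s, (1 : ℝ) ∂μ := by simp [Measure.real]
    _ ≤ ∫ t in Z ∩ s, g t ∂μ :=
        setIntegral_mono_on ((integrableOn_const_iff).mpr (Or.inr
          (lt_of_le_of_lt (measure_mono Set.inter_subset_right) hμs.lt_top)))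
          (hg_int.mono_set Set.inter_subset_right) (hZ.inter hs) fun t ht => ht.1
    _ ≤ ∫ t in s, g t ∂μ :=
        setIntegral_mono_set hg_int (Eventually.of_forall hg_nonneg)
          (Eventually.of_forall Set.inter_subset_right)

lemma phiE_eq_zero_of_mem {E : Set ℝ} {t : ℝ} (ht : t ∈ E) : phiE E t = 0 := by
  simp [phiE, Metric.infDist_zero_of_mem ht]

lemma translateFlow_apply_zero (t : ℝ) (ψ : C(ℝ, ℝ)) : translateFlow t ψ 0 = ψ t := by
  simp [translateFlow]

lemma density_le_orbit_average_cutoffAtZero (E : Set ℝ) (k : ℕ) {a b : ℝ} (hab : a < b) :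
    (volume (E ∩ Set.Icc a b)).toReal / (b - a) ≤
      (b - a)⁻¹ * ∫ t in Set.Icc a b,
        cutoffAtZero k (fun ψ : C(ℝ, ℝ) => ψ 0) (translateFlow t (phiE E)) := by
  simp only [cutoffAtZero, translateFlow_apply_zero]
  have hg := (phiE E).continuous.cutoffAtZero k
  rw [div_eq_inv_mul]
  exact mul_le_mul_of_nonneg_left
    (measure_inter_toReal_le_setIntegral measurableSet_Icc measure_Icc_lt_top.ne E hg
      hg.integrableOn_Icc (cutoffAtZero_nonneg k _)
      fun t ht => (cutoffAtZero_of_eq_zero k (phiE_eq_zero_of_mem ht)).ge)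
    (inv_nonneg.mpr (sub_pos.mpr hab).le)

theorem correspondence_weak_star_limit_lower_bound_general
    [MeasurableSpace C(ℝ, ℝ)] [BorelSpace C(ℝ, ℝ)]
    (E : Set ℝ)
    (a b : ℕ → ℝ) (hab : ∀ n, a n < b n)
    (hdens : Tendsto
      (fun n => (volume (E ∩ Set.Icc (a n) (b n))).toReal / (b n - a n))
      atTop (nhds (upperBanachDensity E)))
    (ν : Measure C(ℝ, ℝ)) [IsProbabilityMeasure ν]
    (hν : ∀ f : C(ℝ, ℝ) → ℝ, Continuous f → (∃ C : ℝ, ∀ ψ, |f ψ| ≤ C) →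
      Tendsto
        (fun n => (b n - a n)⁻¹ *
          ∫ t in Set.Icc (a n) (b n), f (translateFlow t (phiE E)))
        atTop (nhds (∫ ψ, f ψ ∂ν))) :
    ENNReal.ofReal (upperBanachDensity E) ≤ ν {ψ : C(ℝ, ℝ) | ψ 0 = 0} := by
  have heval : Continuous fun ψ : C(ℝ, ℝ) => ψ 0 := continuous_eval_const 0
  have hcutoff : ∀ k, upperBanachDensity E ≤ ∫ ψ, cutoffAtZero k (fun ψ => ψ 0) ψ ∂ν :=
    fun k => le_of_tendsto_of_tendsto' hdens
      (hν _ (heval.cutoffAtZero k) ⟨1, abs_cutoffAtZero_le_one k _⟩)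
      fun n => density_le_orbit_average_cutoffAtZero E k (hab n)
  exact ENNReal.ofReal_le_of_le_toReal
    (ge_of_tendsto' (tendsto_integral_cutoffAtZero ν heval) hcutoff)

/-- **Correspondence principle, lower bound lemma.**  Let `E ⊆ ℝ` be measurable with
`D*(E) > 0`, let `φ(s) = min{1, dist(s, E)}`, and let `ν` be a weak-* limit of the measures
`μ_n(f) = (1/m(S_n)) ∫_{S_n} f(T_t φ) dt` along intervals `S_n = [a_n, b_n]` with
`m(S_n ∩ E)/m(S_n) → D*(E)`.  Then `ν({ψ : ψ(0) = 0}) ≥ D*(E)`. -/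
theorem correspondence_weak_star_limit_lower_bound
    [MeasurableSpace C(ℝ, ℝ)] [BorelSpace C(ℝ, ℝ)]
    (E : Set ℝ) (hEmeas : MeasurableSet E)
    (hpos : 0 < upperBanachDensity E)
    (a b : ℕ → ℝ) (hab : ∀ n, a n < b n)
    (hdens : Tendsto
      (fun n => (volume (E ∩ Set.Icc (a n) (b n))).toReal / (b n - a n))
      atTop (nhds (upperBanachDensity E)))
    (ν : Measure C(ℝ, ℝ)) [IsProbabilityMeasure ν]
    (hν : ∀ f : C(ℝ, ℝ) → ℝ, Continuous f → (∃ C : ℝ, ∀ ψ, |f ψ| ≤ C) →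
      Tendsto
        (fun n => (b n - a n)⁻¹ *
          ∫ t in Set.Icc (a n) (b n), f (translateFlow t (phiE E)))
        atTop (nhds (∫ ψ, f ψ ∂ν))) :
    ENNReal.ofReal (upperBanachDensity E) ≤ ν {ψ : C(ℝ, ℝ) | ψ 0 = 0} :=
  correspondence_weak_star_limit_lower_bound_general E a b hab hdens ν hν
end

section
/- Let (X,𝒳,μ,{T_t}) be a flow on a compact metric space with μ a Borel probability measure and suppose μ-almost every point is generic for μ (Birkhoff averages along [0,N] of every continuous function converge to the space average). Let ψ₀ ∈ X be a generic point and let φ ∈ X be a point whose orbit closure contains ψ₀. Then φ is quasi-generic for μ: there exists a sequence of intervals I_N ⊆ ℝ with diam(I_N) → ∞ such that (1/m(I_N)) ∫_{I_N} f(T_tφ) dt → ∫ f dμ for every continuous f on X. -/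
open MeasureTheory Filter
open scoped ENNReal

/-!
Fix a dense sequence `g k` in `C(X, ℝ)` and record all its averages over `[0, R]` at once as a
point of `ℕ → ℝ`, a first-countable space. For fixed `R` this point depends continuously on the
base point, and at `ψ₀` it converges to `(∫ g k dμ)_k` as `R → ∞`. Since `ψ₀` is a limit of points
`T c φ`, a diagonal choice gives `R n → ∞` and `c n` along which the averages of every `g k` over
`[0, R n]` at `T c n φ`, i.e. over `[c n, c n + R n]` at `φ`, converge to `∫ g k dμ`. All these
averages are `1`-Lipschitz in the function, so convergence passes from the dense sequence to
every `f`.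
-/

open Set Topology ProbabilityTheory

theorem exists_seq_tendsto_of_tendsto_of_mem_closure_range {ι τ X Y : Type*}
    [TopologicalSpace X] [TopologicalSpace Y] [FirstCountableTopology Y]
    {l : Filter ι} [l.IsCountablyGenerated] [l.NeBot] {F : ι → X → Y} (hF : ∀ i, Continuous (F i))
    {γ : τ → X} {x₀ : X} (hx₀ : x₀ ∈ closure (range γ)) {y : Y}
    (hy : Tendsto (fun i => F i x₀) l (𝓝 y)) :
    ∃ (i : ℕ → ι) (c : ℕ → τ),
      Tendsto i atTop l ∧ Tendsto (fun n => F (i n) (γ (c n))) atTop (𝓝 y) := by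
  let G : ι × τ → ι × Y := fun p => (p.1, F p.1 (γ p.2))
  have : (comap G (l ×ˢ 𝓝 y)).NeBot := by
    refine comap_neBot_iff.2 fun s hs => ?_
    obtain ⟨U, hU, V, hV, hUV⟩ := mem_prod_iff.1 hs
    obtain ⟨i, hiU, hiV⟩ :=
      ((eventually_mem_set.2 hU).and (hy.eventually (interior_mem_nhds.2 hV))).exists
    obtain ⟨_, hcV, c, rfl⟩ := mem_closure_iff.1 hx₀ _ (isOpen_interior.preimage (hF i)) hiV
    exact ⟨(i, c), hUV ⟨hiU, interior_subset hcV⟩⟩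
  obtain ⟨p, hp⟩ := exists_seq_tendsto (comap G (l ×ˢ 𝓝 y))
  obtain ⟨hi, hc⟩ := tendsto_prod_iff'.1 (tendsto_comap_iff.1 hp)
  exact ⟨fun n => (p n).1, fun n => (p n).2, hi, hc⟩

theorem DenseRange.tendsto_of_lipschitzWith {κ ι E Z : Type*} [PseudoMetricSpace E]
    [PseudoMetricSpace Z] {g : κ → E} (hg : DenseRange g) {L : ι → E → Z} {K : NNReal}
    (hL : ∀ i, LipschitzWith K (L i)) {Λ : E → Z} (hΛ : Continuous Λ) {l : Filter ι}
    (h : ∀ k, Tendsto (L · (g k)) l (𝓝 (Λ (g k)))) (x : E) :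
    Tendsto (L · x) l (𝓝 (Λ x)) := by
  have hclosed : IsClosed {x | Tendsto (L · x) l (𝓝 (Λ x))} :=
    (LipschitzWith.uniformEquicontinuous L K hL).equicontinuous.isClosed_setOfPred_tendsto hΛ
  exact hclosed.closure_subset_iff.2 (range_subset_iff.2 h) (hg.closure_range ▸ mem_univ x)

theorem lipschitzWith_one_integral_comp {X α : Type*} [TopologicalSpace X] [CompactSpace X]
    [MeasurableSpace X] [OpensMeasurableSpace X] [MeasurableSpace α] (ν : Measure α)
    [IsProbabilityMeasure ν] {γ : α → X} (hγ : Measurable γ) :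
    LipschitzWith 1 fun f : C(X, ℝ) => ∫ a, f (γ a) ∂ν := by
  have hint (f : C(X, ℝ)) : Integrable (fun a => f (γ a)) ν :=
    .of_bound (f.continuous.measurable.comp hγ).aestronglyMeasurable ‖f‖
      (.of_forall fun a => f.norm_coe_le_norm _)
  refine LipschitzWith.of_dist_le_mul fun f g => ?_
  rw [NNReal.coe_one, one_mul, dist_eq_norm, dist_eq_norm, ← integral_sub (hint f) (hint g)]
  simpa using norm_integral_le_of_norm_le_const (μ := ν)
    (.of_forall fun a => (f - g).norm_coe_le_norm (γ a))

theorem inv_sub_mul_setIntegral_Icc_eq_integral_cond {a b : ℝ} (hab : a < b) (g : ℝ → ℝ) :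
    (b - a)⁻¹ * ∫ t in Icc a b, g t = ∫ t, g t ∂(volume[|Icc a b]) := by
  rw [ProbabilityTheory.cond, integral_smul_measure, Real.volume_Icc, ENNReal.toReal_inv,
    ENNReal.toReal_ofReal (sub_pos.2 hab).le, smul_eq_mul]

theorem lipschitzWith_one_inv_sub_mul_setIntegral_Icc {X : Type*} [TopologicalSpace X]
    [CompactSpace X] [MeasurableSpace X] [BorelSpace X] {a b : ℝ} (hab : a < b)
    {γ : ℝ → X} (hγ : Continuous γ) :
    LipschitzWith 1 fun f : C(X, ℝ) => (b - a)⁻¹ * ∫ t in Icc a b, f (γ t) := by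
  have := cond_isProbabilityMeasure_of_finite (μ := volume) (s := Icc a b)
    (by simpa [Real.volume_Icc] using hab) (by simp [Real.volume_Icc])
  simpa only [inv_sub_mul_setIntegral_Icc_eq_integral_cond hab] using
    lipschitzWith_one_integral_comp (volume[|Icc a b]) hγ.measurable

theorem setIntegral_Icc_add_eq_setIntegral_Icc_zero {E : Type*} [NormedAddCommGroup E]
    [NormedSpace ℝ E] (g : ℝ → E) (c R : ℝ) :
    ∫ t in Icc c (c + R), g t = ∫ t in Icc 0 R, g (t + c) := by
  conv_lhs => rw [← map_add_right_eq_self volume c]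
  rw [← MeasurableEquiv.coe_addRight, setIntegral_map_equiv]
  simp

theorem quasi_generic_of_generic_in_orbit_closure_general
    {X : Type*} [MetricSpace X] [CompactSpace X] [MeasurableSpace X] [BorelSpace X]
    (μ : Measure X) [IsProbabilityMeasure μ]
    (T : ℝ → X → X)
    (hTcont : Continuous fun p : ℝ × X => T p.1 p.2)
    (hTadd : ∀ s t : ℝ, T (s + t) = T s ∘ T t)
    (ψ₀ : X)
    (hψ₀generic : ∀ f : C(X, ℝ),
      Tendsto (fun R : ℝ => R⁻¹ * ∫ t in Set.Icc (0 : ℝ) R, f (T t ψ₀))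
        atTop (nhds (∫ y, f y ∂μ)))
    (φ : X) (hφ : ψ₀ ∈ closure (Set.range fun t : ℝ => T t φ)) :
    ∃ a b : ℕ → ℝ, (∀ n, a n ≤ b n) ∧
      Tendsto (fun n => b n - a n) atTop atTop ∧
      ∀ f : C(X, ℝ),
        Tendsto (fun n => (b n - a n)⁻¹ * ∫ t in Set.Icc (a n) (b n), f (T t φ))
          atTop (nhds (∫ y, f y ∂μ)) := by
  obtain ⟨g, hg⟩ := TopologicalSpace.exists_dense_seq C(X, ℝ)
  let F : ℝ → X → ℕ → ℝ := fun R x k => R⁻¹ * ∫ t in Icc 0 R, g k (T t x)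
  have hF (R : ℝ) : Continuous (F R) := continuous_pi fun k => continuous_const.mul <|
    continuous_parametric_integral_of_continuous (f := fun x t => g k (T t x))
      ((g k).continuous.comp (hTcont.comp continuous_swap)) isCompact_Icc
  obtain ⟨R, c, hR, hconv⟩ := exists_seq_tendsto_of_tendsto_of_mem_closure_range hF hφ
    (tendsto_pi_nhds.2 fun k => hψ₀generic (g k))
  -- `R n` is only eventually positive; capping it below keeps every interval nondegenerate.
  refine ⟨c, fun n => c n + max (R n) 1, fun n => by simp, ?_, fun f => ?_⟩
  · simpa only [add_sub_cancel_left] using tendsto_atTop_mono (fun n => le_max_left _ 1) hR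
  have horbit : Continuous fun t => T t φ := hTcont.comp (.prodMk_left φ)
  refine hg.tendsto_of_lipschitzWith
    (fun n => lipschitzWith_one_inv_sub_mul_setIntegral_Icc (by simp) horbit)
    (lipschitzWith_one_integral_comp μ measurable_id).continuous (fun k => ?_) f
  refine (tendsto_pi_nhds.1 hconv k).congr' ?_
  filter_upwards [hR.eventually_ge_atTop 1] with n hn
  simp only [F, max_eq_left hn, add_sub_cancel_left, setIntegral_Icc_add_eq_setIntegral_Icc_zero,
    hTadd, Function.comp_apply]

/-- **Quasi-genericity from genericity.**  Let `{T_t}` be a continuous measure-preserving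
flow on a compact metric space `X` with `μ` a Borel probability measure such that μ-a.e.
point is generic for `μ`.  If `ψ₀` is a generic point and the orbit closure of `φ` contains
`ψ₀`, then `φ` is quasi-generic for `μ`: there exist intervals `I_N = [a_N, b_N]` with
`b_N - a_N → ∞` along which the averages of every continuous function at `T_t φ` converge
to its space average. -/
theorem quasi_generic_of_generic_in_orbit_closure
    {X : Type*} [MetricSpace X] [CompactSpace X] [MeasurableSpace X] [BorelSpace X]
    (μ : Measure X) [IsProbabilityMeasure μ]
    (T : ℝ → X → X)
    (hTcont : Continuous fun p : ℝ × X => T p.1 p.2)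
    (hT0 : T 0 = id)
    (hTadd : ∀ s t : ℝ, T (s + t) = T s ∘ T t)
    (hTmp : ∀ t : ℝ, MeasurePreserving (T t) μ μ)
    (hae_generic : ∀ᵐ x ∂μ, ∀ f : C(X, ℝ),
      Tendsto (fun R : ℝ => R⁻¹ * ∫ t in Set.Icc (0 : ℝ) R, f (T t x))
        atTop (nhds (∫ y, f y ∂μ)))
    (ψ₀ : X)
    (hψ₀generic : ∀ f : C(X, ℝ),
      Tendsto (fun R : ℝ => R⁻¹ * ∫ t in Set.Icc (0 : ℝ) R, f (T t ψ₀))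
        atTop (nhds (∫ y, f y ∂μ)))
    (φ : X) (hφ : ψ₀ ∈ closure (Set.range fun t : ℝ => T t φ)) :
    ∃ a b : ℕ → ℝ, (∀ n, a n ≤ b n) ∧
      Tendsto (fun n => b n - a n) atTop atTop ∧
      ∀ f : C(X, ℝ),
        Tendsto (fun n => (b n - a n)⁻¹ * ∫ t in Set.Icc (a n) (b n), f (T t φ))
          atTop (nhds (∫ y, f y ∂μ)) :=
  quasi_generic_of_generic_in_orbit_closure_general μ T hTcont hTadd ψ₀ hψ₀generic φ hφ
end
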